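/- Let (X,d) be a metric space, γ a Borel measure on X with 0 < γ(B) < ∞ for every ball B, and m : X → (0,∞) an admissibility function. Let 1 ≤ q < ∞ with conjugate exponent q' (1/q + 1/q' = 1), let B = B(c,r) be a ball with 0 < r ≤ 5·m(c), and let f be a measurable function on D vanishing outside T(B). Then ∫_X A_q^1 f(x) dγ(x) ≤ γ(B)^{1/q'} · (∬_{T(B)} |f(y,t)|^q dγ(y) dt/t)^{1/q}. -/

import Mathlib

open MeasureTheory Metric ENNReal

noncomputable def tMeasure : Measure ℝ :=
  (volume : Measure ℝ).withDensity fun t => ENNReal.ofReal (1 / t)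

noncomputable def planeMeasure {X : Type*} [MeasurableSpace X] (γ : Measure X) :
    Measure (X × ℝ) := γ.prod tMeasure

def admRegion {X : Type*} (m : X → ℝ) : Set (X × ℝ) := {p | 0 < p.2 ∧ p.2 < m p.1}

def tCone {X : Type*} [PseudoMetricSpace X] (m : X → ℝ) (α : ℝ) (x : X) : Set (X × ℝ) :=
  {p | 0 < p.2 ∧ p.2 < m p.1 ∧ dist x p.1 < α * p.2}

def tentSet {X : Type*} [PseudoMetricSpace X] (m : X → ℝ) (O : Set X) : Set (X × ℝ) :=
  {p | 0 < p.2 ∧ p.2 < m p.1 ∧ Metric.ball p.1 p.2 ⊆ O}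

noncomputable def Afun {X : Type*} [PseudoMetricSpace X] [MeasurableSpace X]
    (γ : Measure X) (m : X → ℝ) (q α : ℝ) (f : X × ℝ → ℂ) (x : X) : ℝ≥0∞ :=
  (∫⁻ p in tCone m α x, (‖f p‖₊ : ℝ≥0∞) ^ q / γ (Metric.ball p.1 p.2) ∂(planeMeasure γ)) ^ (1 / q)

noncomputable def tNorm {X : Type*} [PseudoMetricSpace X] [MeasurableSpace X]
    (γ : Measure X) (m : X → ℝ) (p q α : ℝ) (f : X × ℝ → ℂ) : ℝ≥0∞ :=
  (∫⁻ x, Afun γ m q α f x ^ p ∂γ) ^ (1 / p)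

/-! Outside `B` the function `A_q^1 f` vanishes, since a point `(y, t)` of the tent `T(B)` with
`d(x, y) < t` forces `x ∈ B(y, t) ⊆ B`. Hölder's inequality on `B` then bounds `∫ A_q^1 f` by
`γ(B)^{1/q'} ‖A_q^1 f‖_q`, and by Tonelli `∫ (A_q^1 f)^q dγ` is at most
`∬ |f|^q γ(B(y,t)) / γ(B(y,t))`, which is `∬ |f|^q`. Tonelli needs the distance to be jointly
measurable, i.e. `X` separable; this follows from `γ` being positive and finite on balls. -/

instance : SFinite tMeasure := inferInstanceAs (SFinite (volume.withDensity _))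

section MeasureOfBalls

variable {X : Type*} [PseudoMetricSpace X] [MeasurableSpace X] (γ : Measure X)

theorem sigmaFinite_of_measure_ball_lt_top (h : ∀ (c : X) (r : ℝ), 0 < r → γ (ball c r) < ⊤) :
    SigmaFinite γ := by
  rcases isEmpty_or_nonempty X with _ | ⟨⟨c⟩⟩
  · infer_instance
  · exact ⟨⟨{ set := fun n : ℕ => ball c (n + 1)
              set_mem := fun _ => Set.mem_univ _
              finite := fun n => h c _ n.cast_add_one_pos
              spanning := iUnion_ball_nat_succ c }⟩⟩

theorem secondCountableTopology_of_measure_ball_pos [OpensMeasurableSpace X] [SFinite γ]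
    (h : ∀ (c : X) (r : ℝ), 0 < r → 0 < γ (ball c r)) : SecondCountableTopology X := by
  refine secondCountable_of_almost_dense_set fun ε hε => ?_
  obtain ⟨M, hM⟩ := zorn_subset {s : Set X | s.Pairwise (ε ≤ dist · ·)} fun C hC hchain =>
    ⟨⋃₀ C, (Set.pairwise_sUnion hchain.directedOn).2 hC, fun _ => Set.subset_sUnion_of_mem⟩
  refine ⟨M, ?_, fun x => ?_⟩
  · -- a maximal `ε`-separated set carries disjoint balls of positive measure
    have hdisj : Pairwise (Function.onFun Disjoint fun y : M => ball (y : X) (ε / 2)) :=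
      fun y z hyz => ball_disjoint_ball (by linarith [hM.prop y.2 z.2 (Subtype.coe_ne_coe.2 hyz)])
    have hcount := Measure.countable_meas_pos_of_disjoint_iUnion (μ := γ)
      (fun _ => measurableSet_ball) hdisj
    simp only [h _ _ (half_pos hε), Set.ofPred_true, Set.countable_univ_iff] at hcount
    exact Set.countable_coe_iff.1 hcount
  · by_contra! hfar
    have hins : insert x M ∈ {s : Set X | s.Pairwise (ε ≤ dist · ·)} :=
      Set.pairwise_insert.2 ⟨hM.prop, fun y hy _ => ⟨(hfar y hy).le, by
        rw [dist_comm]; exact (hfar y hy).le⟩⟩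
    have := hfar x (hM.2 hins (Set.subset_insert x M) (Set.mem_insert x M))
    rw [dist_self] at this
    linarith

end MeasureOfBalls

theorem lintegral_le_measure_rpow_mul_lintegral_rpow {α : Type*} [MeasurableSpace α]
    {μ : Measure α} {s : Set α} {F : α → ℝ≥0∞} (hF : ∀ x ∉ s, F x = 0) {q : ℝ} (hq : 1 ≤ q) :
    ∫⁻ x, F x ∂μ ≤ μ s ^ (1 - 1 / q) * (∫⁻ x, F x ^ q ∂μ) ^ (1 / q) := by
  -- `F` need not be measurable, so pass to a measurable minorant with the same integral
  obtain ⟨g, hg, hgF, hFg⟩ := exists_measurable_le_lintegral_eq μ F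
  have hgs : g.support ⊆ s := fun x hx => by_contra fun hxs => hx (le_antisymm
    ((hgF x).trans (hF x hxs).le) bot_le)
  have hgq : ∫⁻ x in s, g x ^ q ∂μ ≤ ∫⁻ x, F x ^ q ∂μ :=
    (setLIntegral_le_lintegral s _).trans
      (lintegral_mono fun x => ENNReal.rpow_le_rpow (hgF x) (by linarith))
  rw [hFg, ← setLIntegral_eq_of_support_subset hgs]
  rcases hq.eq_or_lt with rfl | hq
  · simpa using hgq
  have hpq := Real.HolderConjugate.conjExponent hq
  have hconj : 1 / q.conjExponent = 1 - 1 / q := by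
    rw [eq_sub_iff_add_eq, add_comm, one_div, one_div]; exact hpq.inv_add_inv_eq_one
  calc ∫⁻ x in s, g x ∂μ
      ≤ (∫⁻ x in s, g x ^ q ∂μ) ^ (1 / q) *
          (∫⁻ _ in s, 1 ^ q.conjExponent ∂μ) ^ (1 / q.conjExponent) := by
        simpa using ENNReal.lintegral_mul_le_Lp_mul_Lq (μ.restrict s) hpq hg.aemeasurable
          (aemeasurable_const (b := 1))
    _ ≤ μ s ^ (1 - 1 / q) * (∫⁻ x, F x ^ q ∂μ) ^ (1 / q) := by
        rw [mul_comm, hconj]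
        simp only [ENNReal.one_rpow, setLIntegral_const, one_mul]
        gcongr

section SecondCountable

variable {X : Type*} [PseudoMetricSpace X] [MeasurableSpace X] [OpensMeasurableSpace X]
  [SecondCountableTopology X] (γ : Measure X) [SFinite γ]

theorem measurable_measure_ball : Measurable fun p : X × ℝ => γ (ball p.1 p.2) :=
  measurable_measure_prodMk_left
    (isOpen_lt (continuous_snd.dist continuous_fst.fst) continuous_fst.snd).measurableSet

theorem lintegral_setLIntegral_dist_lt (ν : Measure ℝ) [SFinite ν] {g : X × ℝ → ℝ≥0∞}
    (hg : Measurable g) :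
    ∫⁻ x, ∫⁻ p in {p : X × ℝ | dist x p.1 < p.2}, g p ∂γ.prod ν ∂γ =
      ∫⁻ p, γ (ball p.1 p.2) * g p ∂γ.prod ν := by
  set T : Set (X × (X × ℝ)) := {z | dist z.1 z.2.1 < z.2.2}
  have hT : MeasurableSet T :=
    (isOpen_lt (continuous_fst.dist continuous_snd.fst) continuous_snd.snd).measurableSet
  calc ∫⁻ x, ∫⁻ p in {p : X × ℝ | dist x p.1 < p.2}, g p ∂γ.prod ν ∂γ
      = ∫⁻ x, ∫⁻ p, T.indicator (fun z => g z.2) (x, p) ∂γ.prod ν ∂γ := by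
        refine lintegral_congr fun x => (lintegral_indicator ?_ _).symm
        exact (isOpen_lt (continuous_const.dist continuous_fst) continuous_snd).measurableSet
    _ = ∫⁻ p, ∫⁻ x, T.indicator (fun z => g z.2) (x, p) ∂γ ∂γ.prod ν :=
        lintegral_lintegral_swap ((hg.comp measurable_snd).indicator hT).aemeasurable
    _ = ∫⁻ p, γ (ball p.1 p.2) * g p ∂γ.prod ν := by
        refine lintegral_congr fun p => ?_
        rw [mul_comm, ← lintegral_indicator_const measurableSet_ball]
        rfl

end SecondCountable

section SquareFunction

variable {X : Type*} [PseudoMetricSpace X] [MeasurableSpace X] (γ : Measure X) (m : X → ℝ)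
  {q : ℝ} (f : X × ℝ → ℂ)

theorem Afun_rpow_le_setLIntegral (hq : 0 < q) (x : X) :
    Afun γ m q 1 f x ^ q ≤ ∫⁻ p in {p : X × ℝ | dist x p.1 < p.2},
      (‖f p‖₊ : ℝ≥0∞) ^ q / γ (ball p.1 p.2) ∂planeMeasure γ := by
  rw [Afun, ← ENNReal.rpow_mul, one_div_mul_cancel hq.ne', ENNReal.rpow_one]
  exact lintegral_mono_set fun p hp => by simpa using hp.2.2

theorem Afun_eq_zero_of_notMem [OpensMeasurableSpace X] (hq : 0 < q) {O : Set X}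
    (hf : ∀ p ∉ tentSet m O, f p = 0) {x : X} (hx : x ∉ O) : Afun γ m q 1 f x = 0 := by
  have hS : MeasurableSet {p : X × ℝ | dist x p.1 < p.2} :=
    measurableSet_lt ((continuous_const.dist continuous_id).measurable.comp measurable_fst)
      measurable_snd
  -- a point of the tent whose ball contains `x` would put `x` in `O`
  have hzero : Set.EqOn (fun p => (‖f p‖₊ : ℝ≥0∞) ^ q / γ (ball p.1 p.2)) 0
      {p : X × ℝ | dist x p.1 < p.2} := fun p hp => by
    have hp : f p = 0 := hf p fun hpO => hx (hpO.2.2 hp)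
    simp [hp, ENNReal.zero_rpow_of_pos hq]
  have hA := Afun_rpow_le_setLIntegral γ m f hq x
  rw [setLIntegral_eq_zero hS hzero, nonpos_iff_eq_zero, ENNReal.rpow_eq_zero_iff] at hA
  exact (hA.resolve_right fun h => lt_asymm hq h.2).1

theorem lintegral_Afun_rpow_le [OpensMeasurableSpace X] [SecondCountableTopology X] [SFinite γ]
    (hq : 0 < q) (hf : Measurable f) :
    ∫⁻ x, Afun γ m q 1 f x ^ q ∂γ ≤ ∫⁻ p, (‖f p‖₊ : ℝ≥0∞) ^ q ∂planeMeasure γ :=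
  calc ∫⁻ x, Afun γ m q 1 f x ^ q ∂γ
      ≤ ∫⁻ x, ∫⁻ p in {p : X × ℝ | dist x p.1 < p.2},
          (‖f p‖₊ : ℝ≥0∞) ^ q / γ (ball p.1 p.2) ∂planeMeasure γ ∂γ :=
        lintegral_mono fun x => Afun_rpow_le_setLIntegral γ m f hq x
    _ = ∫⁻ p, γ (ball p.1 p.2) * ((‖f p‖₊ : ℝ≥0∞) ^ q / γ (ball p.1 p.2)) ∂planeMeasure γ :=
        lintegral_setLIntegral_dist_lt γ tMeasure
          ((hf.nnnorm.coe_nnreal_ennreal.pow_const q).div (measurable_measure_ball γ))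
    _ ≤ ∫⁻ p, (‖f p‖₊ : ℝ≥0∞) ^ q ∂planeMeasure γ := lintegral_mono fun _ => ENNReal.mul_div_le

end SquareFunction

theorem stmt12_general {X : Type*} [MetricSpace X] [MeasurableSpace X] [BorelSpace X]
    (γ : Measure X)
    (hγ : ∀ (c : X) (r : ℝ), 0 < r → 0 < γ (ball c r) ∧ γ (ball c r) < ⊤)
    (m : X → ℝ)
    (q : ℝ) (hq : 1 ≤ q)
    (f : X × ℝ → ℂ) (hf : Measurable f)
    (c : X) (r : ℝ)
    (hsupp : ∀ p, p ∉ tentSet m (ball c r) → f p = 0) :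
    ∫⁻ x, Afun γ m q 1 f x ∂γ ≤
      γ (ball c r) ^ (1 - 1 / q) *
        (∫⁻ p in tentSet m (ball c r), (‖f p‖₊ : ℝ≥0∞) ^ q ∂(planeMeasure γ)) ^ (1 / q) := by
  have hq0 : 0 < q := by linarith
  have := sigmaFinite_of_measure_ball_lt_top γ fun c r hr => (hγ c r hr).2
  have := secondCountableTopology_of_measure_ball_pos γ fun c r hr => (hγ c r hr).1
  have hsupport : (fun p => (‖f p‖₊ : ℝ≥0∞) ^ q).support ⊆ tentSet m (ball c r) :=
    fun p hp => by_contra fun hpT => hp (by simp [hsupp p hpT, ENNReal.zero_rpow_of_pos hq0])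
  calc ∫⁻ x, Afun γ m q 1 f x ∂γ
      ≤ γ (ball c r) ^ (1 - 1 / q) * (∫⁻ x, Afun γ m q 1 f x ^ q ∂γ) ^ (1 / q) :=
        lintegral_le_measure_rpow_mul_lintegral_rpow
          (fun _ hx => Afun_eq_zero_of_notMem γ m f hq0 hsupp hx) hq
    _ ≤ γ (ball c r) ^ (1 - 1 / q) *
          (∫⁻ p in tentSet m (ball c r), (‖f p‖₊ : ℝ≥0∞) ^ q ∂(planeMeasure γ)) ^ (1 / q) := by
        rw [setLIntegral_eq_of_support_subset hsupport]
        gcongr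
        exact lintegral_Afun_rpow_le γ m f hq0 hf

theorem stmt12 {X : Type*} [MetricSpace X] [MeasurableSpace X] [BorelSpace X]
    (γ : Measure X)
    (hγ : ∀ (c : X) (r : ℝ), 0 < r → 0 < γ (ball c r) ∧ γ (ball c r) < ⊤)
    (m : X → ℝ) (hm : ∀ x, 0 < m x)
    (q : ℝ) (hq : 1 ≤ q)
    (f : X × ℝ → ℂ) (hf : Measurable f)
    (c : X) (r : ℝ) (hr : 0 < r) (hradm : r ≤ 5 * m c)
    (hsupp : ∀ p, p ∉ tentSet m (ball c r) → f p = 0) :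
    ∫⁻ x, Afun γ m q 1 f x ∂γ ≤
      γ (ball c r) ^ (1 - 1 / q) *
        (∫⁻ p in tentSet m (ball c r), (‖f p‖₊ : ℝ≥0∞) ^ q ∂(planeMeasure γ)) ^ (1 / q) :=
  stmt12_general γ hγ m q hq f hf c r hsupp
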